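/- Main theorem (i): Under the standing assumptions, if Σ(1−βₙ) < ∞, then the sequence x_{n+1} = αₙu + (1−αₙ)[βₙA_Txₙ + (1−βₙ)A_Sxₙ] converges strongly to a point p ∈ Fix(T). -/

import Mathlib

/-!
Let `p` be the metric projection of `u` onto `Fix T` and let `R` be the radius of a ball around a
common fixed point of `T` and `S` that contains the orbit (`A_T` and `A_S` are quasi-nonexpansive
there). With `yₙ = βₙ A_T xₙ + (1 - βₙ) A_S xₙ` we have `‖yₙ - A_T xₙ‖ ≤ 2R (1 - βₙ)`, so the
scheme is a Halpern iteration of the averaged map `A_T` with summable errors. For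
`aₙ = ‖xₙ - p‖²` this gives `aₙ₊₁ ≤ (1 - αₙ) aₙ + αₙ bₙ - ηₙ + cₙ` with
`bₙ = 2⟪u - p, xₙ₊₁ - p⟫`, `ηₙ ≈ δ (1 - δ) ‖xₙ - T xₙ‖²` and `∑ cₙ < ∞`. Along any subsequence on
which `ηₙ → 0`, weak cluster points of `(xₙ)` are fixed points of `T` (demiclosedness), so the
variational inequality characterising `p` gives `limsup bₙ ≤ 0` there; the lemma of Maingé and
He–Yang then yields `aₙ → 0`.
-/

open Filter Topology Set Finset
open scoped RealInnerProductSpace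

section RealSequences

theorem tendsto_sum_range_add_one_atTop {α : ℕ → ℝ}
    (h : Tendsto (fun N => ∑ n ∈ range N, α n) atTop atTop) :
    Tendsto (fun N => ∑ n ∈ range N, α (n + 1)) atTop atTop :=
  (tendsto_atTop_add_const_right _ (-α 0) (h.comp (tendsto_add_atTop_nat 1))).congr fun N => by
    simp [sum_range_succ']

theorem tendsto_of_tendsto_one_sub_mul_mul {ι : Type*} {l : Filter ι} {α s : ι → ℝ} {κ : ℝ}
    (hκ : κ ≠ 0) (hα : Tendsto α l (𝓝 0)) (h : Tendsto (fun i => (1 - α i) * κ * s i) l (𝓝 0)) :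
    Tendsto s l (𝓝 0) := by
  have hκα : Tendsto (fun i => (1 - α i) * κ) l (𝓝 κ) := by
    simpa using ((tendsto_const_nhds (x := (1 : ℝ))).sub hα).mul_const κ
  have hdiv := h.div hκα hκ
  rw [zero_div] at hdiv
  refine hdiv.congr' ?_
  filter_upwards [hκα.eventually_ne hκ] with i hi
  exact mul_div_cancel_left₀ (s i) hi

variable {a b α : ℕ → ℝ}

theorem tendsto_sub_succ_of_eventually_le (ha : ∀ n, 0 ≤ a n)
    (h : ∀ᶠ n in atTop, a (n + 1) ≤ a n) :
    Tendsto (fun n => a n - a (n + 1)) atTop (𝓝 0) := by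
  obtain ⟨N, hN⟩ := eventually_atTop.1 h
  have hanti : Antitone fun k => a (N + k) :=
    antitone_nat_of_succ_le fun k => hN (N + k) (Nat.le_add_right N k)
  have hlim : Tendsto a atTop (𝓝 (⨅ k, a (N + k))) := by
    refine (tendsto_add_atTop_iff_nat N).1 ?_
    simpa only [add_comm] using
      tendsto_atTop_ciInf hanti ⟨0, by rintro _ ⟨k, rfl⟩; exact ha _⟩
  simpa using hlim.sub ((tendsto_add_atTop_iff_nat 1).2 hlim)

/-- Xu's lemma. -/
theorem tendsto_zero_of_le_one_sub_mul_add_mul (hα : ∀ n, α n ∈ Icc (0 : ℝ) 1)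
    (hαdiv : Tendsto (fun N => ∑ n ∈ range N, α n) atTop atTop) (ha : ∀ n, 0 ≤ a n)
    (hrec : ∀ n, a (n + 1) ≤ (1 - α n) * a n + α n * b n)
    (hb : ∀ ε > 0, ∀ᶠ n in atTop, b n ≤ ε) :
    Tendsto a atTop (𝓝 0) := by
  refine tendsto_order.2 ⟨fun c hc => .of_forall fun n => hc.trans_le (ha n), fun ε hε => ?_⟩
  obtain ⟨N, hN⟩ := eventually_atTop.1 (hb (ε / 2) (half_pos hε))
  have hle : ∀ n ≥ N, a n ≤ ε / 2 + a N * ∏ k ∈ Ico N n, (1 - α k) := by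
    intro n hn
    induction n, hn using Nat.le_induction with
    | base => simp only [Ico_self]; linarith
    | succ n hn ih =>
      obtain ⟨hα0, hα1⟩ := hα n
      rw [prod_Ico_succ_top hn, ← mul_assoc]
      nlinarith [hrec n, mul_le_mul_of_nonneg_left ih (sub_nonneg.2 hα1),
        mul_le_mul_of_nonneg_left (hN n hn) hα0]
  have hprod : Tendsto (fun n => ∏ k ∈ Ico N n, (1 - α k)) atTop (𝓝 0) := by
    have hexp : Tendsto (fun n => Real.exp (∑ k ∈ range N, α k - ∑ k ∈ range n, α k))
        atTop (𝓝 0) :=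
      Real.tendsto_exp_atBot.comp
        (tendsto_atBot_add_const_left _ _ (tendsto_neg_atTop_atBot.comp hαdiv))
    refine squeeze_zero' (.of_forall fun n => prod_nonneg fun k _ => sub_nonneg.2 (hα k).2)
      ?_ hexp
    filter_upwards [eventually_ge_atTop N] with n hn
    calc ∏ k ∈ Ico N n, (1 - α k) ≤ ∏ k ∈ Ico N n, Real.exp (-α k) :=
          prod_le_prod (fun k _ => sub_nonneg.2 (hα k).2)
            fun k _ => by linarith [Real.add_one_le_exp (-α k)]
      _ = Real.exp (∑ k ∈ range N, α k - ∑ k ∈ range n, α k) := by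
          rw [← Real.exp_sum, sum_neg_distrib, sum_Ico_eq_sub _ hn, neg_sub]
  have hsmall := (hprod.const_mul (a N)).eventually
    (eventually_lt_nhds (b := ε / 2) (by simpa using half_pos hε))
  filter_upwards [eventually_ge_atTop N, hsmall] with n hn hsmall
  linarith [hle n hn]

theorem tendsto_zero_of_frequently_lt_succ (ha : ∀ n, 0 ≤ a n)
    (hfreq : ∃ᶠ n in atTop, a n < a (n + 1))
    (hasc : ∀ ε > 0, ∀ᶠ n in atTop, a n < a (n + 1) → a (n + 1) ≤ ε) :
    Tendsto a atTop (𝓝 0) := by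
  refine tendsto_order.2 ⟨fun c hc => .of_forall fun n => hc.trans_le (ha n), fun ε hε => ?_⟩
  obtain ⟨N, hN⟩ := eventually_atTop.1 (hasc (ε / 2) (half_pos hε))
  obtain ⟨m, hmN, hm⟩ := frequently_atTop.1 hfreq N
  -- past an ascent at `m ≥ N`, each term is an ascent value or lies below its predecessor
  have hle : ∀ n ≥ m + 1, a n ≤ ε / 2 := by
    intro n hn
    induction n, hn using Nat.le_induction with
    | base => exact hN m hmN hm
    | succ n hn ih =>
      by_cases hlt : a n < a (n + 1)
      · exact hN n (by omega) hlt
      · exact (not_lt.1 hlt).trans ih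
  filter_upwards [eventually_ge_atTop (m + 1)] with n hn
  linarith [hle n hn]

/-- Maingé's lemma, in the form of He and Yang. -/
theorem tendsto_zero_of_le_one_sub_mul_add_mul_of_le_sub_add {η γ : ℕ → ℝ}
    (hα : ∀ n, α n ∈ Icc (0 : ℝ) 1)
    (hαdiv : Tendsto (fun N => ∑ n ∈ range N, α n) atTop atTop)
    (ha : ∀ n, 0 ≤ a n) (hη : ∀ n, 0 ≤ η n) (hγ : Tendsto γ atTop (𝓝 0))
    (hrec : ∀ n, a (n + 1) ≤ (1 - α n) * a n + α n * b n)
    (hdesc : ∀ n, a (n + 1) ≤ a n - η n + γ n)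
    (hb : ∀ l ≤ atTop, Tendsto η l (𝓝 0) → ∀ ε > 0, ∀ᶠ n in l, b n ≤ ε) :
    Tendsto a atTop (𝓝 0) := by
  by_cases hfreq : ∃ᶠ n in atTop, a n < a (n + 1)
  · set l := atTop ⊓ 𝓟 {n | a n < a (n + 1)}
    have hηl : Tendsto η l (𝓝 0) := by
      refine squeeze_zero' (.of_forall hη) ?_ (hγ.mono_left inf_le_left)
      exact eventually_inf_principal.2 (.of_forall fun n hn => by linarith [hdesc n, hn.out])
    refine tendsto_zero_of_frequently_lt_succ ha hfreq fun ε hε => ?_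
    filter_upwards [eventually_inf_principal.1 (hb l inf_le_left hηl ε hε)] with n hbn hlt
    obtain ⟨hα0, hα1⟩ := hα n
    have hab : a n < b n := by
      by_contra! h
      nlinarith [hrec n, mul_nonneg hα0 (sub_nonneg.2 h)]
    have hab' : a (n + 1) ≤ b n := by
      nlinarith [hrec n, mul_nonneg (sub_nonneg.2 hα1) (sub_nonneg.2 hab.le)]
    exact hab'.trans (hbn hlt)
  · have hdec : ∀ᶠ n in atTop, a (n + 1) ≤ a n := by
      simpa only [not_lt] using not_frequently.1 hfreq
    have hηt : Tendsto η atTop (𝓝 0) :=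
      squeeze_zero (g := fun n => a n - a (n + 1) + γ n) hη (fun n => by linarith [hdesc n])
        (by simpa using (tendsto_sub_succ_of_eventually_le ha hdec).add hγ)
    exact tendsto_zero_of_le_one_sub_mul_add_mul hα hαdiv ha hrec (hb atTop le_rfl hηt)

theorem tendsto_zero_of_le_one_sub_mul_add_mul_sub_add {η c : ℕ → ℝ} {B : ℝ}
    (hα : ∀ n, α n ∈ Icc (0 : ℝ) 1) (hα0 : Tendsto α atTop (𝓝 0))
    (hαdiv : Tendsto (fun N => ∑ n ∈ range N, α n) atTop atTop)
    (ha : ∀ n, 0 ≤ a n) (hη : ∀ n, 0 ≤ η n) (hc : ∀ n, 0 ≤ c n) (hcsum : Summable c)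
    (hbB : ∀ n, b n ≤ B)
    (hrec : ∀ n, a (n + 1) ≤ (1 - α n) * a n + α n * b n - η n + c n)
    (hb : ∀ l ≤ atTop, Tendsto η l (𝓝 0) → ∀ ε > 0, ∀ᶠ n in l, b n ≤ ε) :
    Tendsto a atTop (𝓝 0) := by
  -- adding the tail sums of `c` to `a` and `b` absorbs the perturbation
  set t : ℕ → ℝ := fun n => ∑' k, c k - ∑ k ∈ range n, c k
  have ht0 : Tendsto t atTop (𝓝 0) := by
    simpa using (tendsto_const_nhds (x := ∑' k, c k)).sub hcsum.hasSum.tendsto_sum_nat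
  have ht : ∀ n, 0 ≤ t n := fun n => sub_nonneg.2 (hcsum.sum_le_tsum _ fun k _ => hc k)
  have htsucc : ∀ n, t n = c n + t (n + 1) := fun n => by
    simp only [t, sum_range_succ]; ring
  have htle : ∀ n, t n ≤ t 0 := fun n => by
    simpa [t] using sum_nonneg fun k (_ : k ∈ range n) => hc k
  have hat := tendsto_zero_of_le_one_sub_mul_add_mul_of_le_sub_add (a := a + t) (b := b + t)
    (γ := fun n => α n * (B + t 0)) hα hαdiv (fun n => add_nonneg (ha n) (ht n)) hη
    (by simpa using hα0.mul_const (B + t 0))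
    (fun n => by simp only [Pi.add_apply]; linarith [hrec n, htsucc n, hη n])
    (fun n => by
      simp only [Pi.add_apply]
      linarith [hrec n, htsucc n, mul_le_mul_of_nonneg_left (hbB n) (hα n).1,
        mul_nonneg (hα n).1 (ha n), mul_nonneg (hα n).1 (ht 0)])
    (fun l hl hηl ε hε => by
      filter_upwards [hb l hl hηl (ε / 2) (half_pos hε),
        (ht0.mono_left hl).eventually (eventually_le_nhds (half_pos hε))] with n h1 h2
      simp only [Pi.add_apply]; linarith)
  exact squeeze_zero ha (fun n => le_add_of_nonneg_right (ht n)) hat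

end RealSequences

section NormedSpace

variable {E : Type*} [NormedAddCommGroup E]

theorem mapsTo_inter_closedBall {C : Set E} {T : E → E} {z : E} (r : ℝ) (hT : MapsTo T C C)
    (hTz : ∀ w ∈ C, ‖T w - z‖ ≤ ‖w - z‖) :
    MapsTo T (C ∩ Metric.closedBall z r) (C ∩ Metric.closedBall z r) := fun w ⟨hwC, hwr⟩ =>
  ⟨hT hwC, by rw [Metric.mem_closedBall, dist_eq_norm] at hwr ⊢; exact (hTz w hwC).trans hwr⟩

theorem isClosed_inter_fixedPoints {C : Set E} {T : E → E} (hCc : IsClosed C)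
    (hne : ∀ x ∈ C, ∀ y ∈ C, ‖T x - T y‖ ≤ ‖x - y‖) :
    IsClosed (C ∩ Function.fixedPoints T) := by
  have hcont : ContinuousOn (fun w => T w - w) C :=
    (LipschitzOnWith.of_dist_le_mul fun x hx y hy => by
      simpa [dist_eq_norm] using hne x hx y hy : LipschitzOnWith 1 T C).continuousOn.sub
      continuousOn_id
  convert hcont.preimage_isClosed_of_isClosed hCc (isClosed_singleton (x := (0 : E))) using 1
  ext w
  simp [Function.mem_fixedPoints, Function.IsFixedPt, sub_eq_zero]

theorem norm_sub_le_of_nonspreading {C : Set E} {S : E → E} {z w : E}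
    (hns : ∀ x ∈ C, ∀ y ∈ C, 2 * ‖S x - S y‖ ^ 2 ≤ ‖S x - y‖ ^ 2 + ‖x - S y‖ ^ 2)
    (hz : z ∈ C) (hSz : S z = z) (hw : w ∈ C) : ‖S w - z‖ ≤ ‖w - z‖ := by
  have h := hns w hw z hz
  rw [hSz] at h
  exact (sq_le_sq₀ (norm_nonneg _) (norm_nonneg _)).1 (by linarith)

variable [NormedSpace ℝ E]

theorem Convex.mapsTo_smul_add_smul {K : Set E} (hK : Convex ℝ K) {f g : E → E} {a b : ℝ}
    (hf : MapsTo f K K) (hg : MapsTo g K K) (ha : 0 ≤ a) (hb : 0 ≤ b) (hab : a + b = 1) :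
    MapsTo (fun w => a • f w + b • g w) K K := fun _ hw => hK (hf hw) (hg hw) ha hb hab

theorem Convex.mapsTo_averaged {K : Set E} (hK : Convex ℝ K) {T : E → E} {δ : ℝ} (hδ0 : 0 ≤ δ)
    (hδ1 : δ ≤ 1) (hT : MapsTo T K K) : MapsTo (fun w => (1 - δ) • w + δ • T w) K K :=
  hK.mapsTo_smul_add_smul (mapsTo_id K) hT (sub_nonneg.2 hδ1) hδ0 (sub_add_cancel 1 δ)

theorem Convex.halpern_mem {K : Set E} (hK : Convex ℝ K) {u : E} {x : ℕ → E} {α : ℕ → ℝ}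
    {Φ : ℕ → E → E} (hu : u ∈ K) (hx0 : x 0 ∈ K) (hΦ : ∀ n, MapsTo (Φ n) K K)
    (hα : ∀ n, α n ∈ Icc (0 : ℝ) 1) (hrec : ∀ n, x (n + 1) = α n • u + (1 - α n) • Φ n (x n))
    (n : ℕ) : x n ∈ K := by
  induction n with
  | zero => exact hx0
  | succ n ih =>
    rw [hrec n]
    exact hK hu (hΦ n ih) (hα n).1 (sub_nonneg.2 (hα n).2) (add_sub_cancel _ _)

theorem norm_smul_add_one_sub_smul_sub_le {v w z : E} {r t : ℝ} (hv : v ∈ Metric.closedBall z r)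
    (hw : w ∈ Metric.closedBall z r) (ht : t ≤ 1) :
    ‖t • v + (1 - t) • w - v‖ ≤ 2 * r * (1 - t) := by
  rw [show t • v + (1 - t) • w - v = (1 - t) • (w - v) by module, norm_smul,
    Real.norm_of_nonneg (sub_nonneg.2 ht), mul_comm, ← dist_eq_norm]
  gcongr
  linarith [dist_triangle_right w v z, Metric.mem_closedBall.1 hv, Metric.mem_closedBall.1 hw]

end NormedSpace

section InnerProductSpace

variable {H : Type*} [NormedAddCommGroup H] [InnerProductSpace ℝ H]

theorem norm_one_sub_smul_add_smul_sq (v w : H) (t : ℝ) :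
    ‖(1 - t) • v + t • w‖ ^ 2 = (1 - t) * ‖v‖ ^ 2 + t * ‖w‖ ^ 2 - t * (1 - t) * ‖v - w‖ ^ 2 := by
  rw [norm_add_sq_real, norm_sub_sq_real, norm_smul, norm_smul, real_inner_smul_left,
    real_inner_smul_right, Real.norm_eq_abs, Real.norm_eq_abs, mul_pow, mul_pow, sq_abs, sq_abs]
  ring

theorem norm_one_sub_smul_add_smul_sub_sq_le {v w p : H} {δ : ℝ} (hδ : 0 ≤ δ)
    (hw : ‖w - p‖ ≤ ‖v - p‖) :
    ‖(1 - δ) • v + δ • w - p‖ ^ 2 ≤ ‖v - p‖ ^ 2 - δ * (1 - δ) * ‖v - w‖ ^ 2 := by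
  have h := norm_one_sub_smul_add_smul_sq (v - p) (w - p) δ
  rw [show (1 - δ) • (v - p) + δ • (w - p) = (1 - δ) • v + δ • w - p by module,
    sub_sub_sub_cancel_right] at h
  rw [h]
  nlinarith [pow_le_pow_left₀ (norm_nonneg _) hw 2]

theorem norm_one_sub_smul_add_smul_sub_le {v w p : H} {δ : ℝ} (hδ0 : 0 ≤ δ) (hδ1 : δ ≤ 1)
    (hw : ‖w - p‖ ≤ ‖v - p‖) : ‖(1 - δ) • v + δ • w - p‖ ≤ ‖v - p‖ := by
  refine (sq_le_sq₀ (norm_nonneg _) (norm_nonneg _)).1 ?_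
  nlinarith [norm_one_sub_smul_add_smul_sub_sq_le hδ0 hw,
    mul_nonneg (mul_nonneg hδ0 (sub_nonneg.2 hδ1)) (sq_nonneg ‖v - w‖)]

theorem norm_smul_add_one_sub_smul_sub_sq_le {u y p : H} {α : ℝ} (hα0 : 0 ≤ α) (hα1 : α ≤ 1) :
    ‖α • u + (1 - α) • y - p‖ ^ 2
      ≤ (1 - α) * ‖y - p‖ ^ 2 + 2 * α * ⟪u - p, α • u + (1 - α) • y - p⟫ := by
  set v := α • u + (1 - α) • y - p
  have hv : v = α • (u - p) + (1 - α) • (y - p) := by module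
  have hsq : ‖(1 - α) • (y - p)‖ ^ 2 ≤ (1 - α) * ‖y - p‖ ^ 2 := by
    rw [norm_smul, Real.norm_of_nonneg (sub_nonneg.2 hα1), mul_pow]
    nlinarith [mul_nonneg (mul_nonneg hα0 (sub_nonneg.2 hα1)) (sq_nonneg ‖y - p‖)]
  have h := norm_sub_sq_real v (α • (u - p))
  rw [show v - α • (u - p) = (1 - α) • (y - p) by rw [hv]; abel, real_inner_smul_right,
    real_inner_comm] at h
  nlinarith [sq_nonneg ‖α • (u - p)‖]

theorem norm_halpern_sub_sq_le {u v w y p : H} {α δ e M E : ℝ} (hα0 : 0 ≤ α) (hα1 : α ≤ 1)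
    (hδ0 : 0 ≤ δ) (hδ1 : δ ≤ 1) (hw : ‖w - p‖ ≤ ‖v - p‖) (hvM : ‖v - p‖ ≤ M)
    (hy : ‖y - ((1 - δ) • v + δ • w)‖ ≤ e) (heE : e ≤ E) :
    ‖α • u + (1 - α) • y - p‖ ^ 2 ≤ (1 - α) * ‖v - p‖ ^ 2
      + α * (2 * ⟪u - p, α • u + (1 - α) • y - p⟫)
      - (1 - α) * (δ * (1 - δ)) * ‖v - w‖ ^ 2 + (2 * M + E) * e := by
  set A := (1 - δ) • v + δ • w
  have hA := norm_one_sub_smul_add_smul_sub_sq_le hδ0 hw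
  have he0 : 0 ≤ e := (norm_nonneg _).trans hy
  have hAM : ‖A - p‖ ≤ M := (norm_one_sub_smul_add_smul_sub_le hδ0 hδ1 hw).trans hvM
  have hyA : ‖y - p‖ ≤ ‖A - p‖ + e := by
    simpa using (norm_sub_le_norm_sub_add_norm_sub y A p).trans (by linarith [norm_sub_rev A p])
  have hy2 : ‖y - p‖ ^ 2 ≤ ‖v - p‖ ^ 2 - δ * (1 - δ) * ‖v - w‖ ^ 2 + (2 * M + E) * e := by
    nlinarith [pow_le_pow_left₀ (norm_nonneg _) hyA 2, mul_le_mul_of_nonneg_right hAM he0,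
      mul_le_mul_of_nonneg_right heE he0]
  have hc : 0 ≤ (2 * M + E) * e := mul_nonneg (by linarith [norm_nonneg (A - p)]) he0
  nlinarith [norm_smul_add_one_sub_smul_sub_sq_le (u := u) (p := p) hα0 hα1 (y := y),
    mul_le_mul_of_nonneg_left hy2 (sub_nonneg.2 hα1), mul_nonneg hα0 hc]

theorem norm_halpern_sub_le {u v w y p : H} {α δ e M E : ℝ} (hα0 : 0 ≤ α)
    (hδ0 : 0 ≤ δ) (hδ1 : δ ≤ 1) (hw : ‖w - p‖ ≤ ‖v - p‖) (hvM : ‖v - p‖ ≤ M)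
    (hy : ‖y - ((1 - δ) • v + δ • w)‖ ≤ e) (heE : e ≤ E) :
    ‖α • u + (1 - α) • y - v‖ ≤ α * (‖u - p‖ + M + E) + e + δ * ‖v - w‖ := by
  set A := (1 - δ) • v + δ • w
  have hAv : ‖A - v‖ = δ * ‖v - w‖ := by
    rw [show A - v = δ • (w - v) by simp only [A]; module, norm_smul, Real.norm_of_nonneg hδ0,
      norm_sub_rev]
  have hAp : ‖A - p‖ ≤ M := (norm_one_sub_smul_add_smul_sub_le hδ0 hδ1 hw).trans hvM
  have huy : ‖u - y‖ ≤ ‖u - p‖ + M + E := by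
    linarith [norm_sub_le_norm_sub_add_norm_sub u A y, norm_sub_le_norm_sub_add_norm_sub u p A,
      norm_sub_rev p A, norm_sub_rev A y]
  calc ‖α • u + (1 - α) • y - v‖ = ‖α • (u - y) + (y - A) + (A - v)‖ := by congr 1; module
    _ ≤ ‖α • (u - y)‖ + ‖y - A‖ + ‖A - v‖ := norm_add₃_le
    _ ≤ α * (‖u - p‖ + M + E) + e + δ * ‖v - w‖ := by
      rw [norm_smul, Real.norm_of_nonneg hα0, hAv]
      gcongr

theorem convex_inter_fixedPoints {C : Set H} {T : H → H} (hCv : Convex ℝ C)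
    (hne : ∀ x ∈ C, ∀ y ∈ C, ‖T x - T y‖ ≤ ‖x - y‖) :
    Convex ℝ (C ∩ Function.fixedPoints T) := by
  rintro w₁ ⟨hw₁C, hw₁T⟩ w₂ ⟨hw₂C, hw₂T⟩ s t hs ht hst
  obtain rfl : s = 1 - t := by linarith
  set w := (1 - t) • w₁ + t • w₂
  have hwC : w ∈ C := hCv hw₁C hw₂C hs ht hst
  refine ⟨hwC, ?_⟩
  have h₁ : ‖T w - w₁‖ ≤ t * ‖w₁ - w₂‖ := by
    have := hne w hwC w₁ hw₁C
    rwa [hw₁T.eq, show w - w₁ = t • (w₂ - w₁) by module, norm_smul, Real.norm_of_nonneg ht,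
      norm_sub_rev w₂] at this
  have h₂ : ‖T w - w₂‖ ≤ (1 - t) * ‖w₁ - w₂‖ := by
    have := hne w hwC w₂ hw₂C
    rwa [hw₂T.eq, show w - w₂ = (1 - t) • (w₁ - w₂) by module, norm_smul,
      Real.norm_of_nonneg hs] at this
  have hsq : ‖T w - w‖ ^ 2 ≤ 0 := by
    have h := norm_one_sub_smul_add_smul_sq (T w - w₁) (T w - w₂) t
    rw [show (1 - t) • (T w - w₁) + t • (T w - w₂) = T w - w by module,
      sub_sub_sub_cancel_left, norm_sub_rev w₂] at h
    rw [h]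
    nlinarith [mul_le_mul_of_nonneg_left (pow_le_pow_left₀ (norm_nonneg _) h₁ 2) hs,
      mul_le_mul_of_nonneg_left (pow_le_pow_left₀ (norm_nonneg _) h₂ 2) ht]
  show T w = w
  simpa [sub_eq_zero] using hsq

variable {ι : Type*}

theorem isFixedPt_of_tendsto_inner {C : Set H} {T : H → H}
    (hne : ∀ x ∈ C, ∀ y ∈ C, ‖T x - T y‖ ≤ ‖x - y‖) {l : Filter ι} [l.NeBot] {x : ι → H}
    {z : H} {B : ℝ} (hxC : ∀ i, x i ∈ C) (hzC : z ∈ C) (hB : ∀ i, ‖x i‖ ≤ B)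
    (hz : ∀ y, Tendsto (fun i => ⟪x i, y⟫) l (𝓝 ⟪z, y⟫))
    (hd : Tendsto (fun i => ‖x i - T (x i)‖) l (𝓝 0)) : T z = z := by
  set w := z - T z
  set d := fun i => x i - T (x i)
  -- expand `‖T (x i) - T z‖ ≤ ‖x i - z‖` with `T (x i) - T z = (x i - z) + (w - d i)`
  have hle : ∀ i, ‖w - d i‖ ^ 2 + 2 * (⟪x i, w⟫ - ⟪z, w⟫) ≤ 2 * (B + ‖z‖) * ‖d i‖ := by
    intro i
    have h := pow_le_pow_left₀ (norm_nonneg _) (hne (x i) (hxC i) z hzC) 2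
    rw [show T (x i) - T z = (x i - z) + (w - d i) by simp only [w, d]; abel,
      norm_add_sq_real, inner_sub_right] at h
    have hxz : ‖x i - z‖ ≤ B + ‖z‖ := (norm_sub_le _ _).trans (by linarith [hB i])
    nlinarith [real_inner_le_norm (x i - z) (d i), inner_sub_left (𝕜 := ℝ) (x i) z w,
      mul_le_mul_of_nonneg_right hxz (norm_nonneg (d i))]
  have hlim : Tendsto (fun i => ‖w - d i‖ ^ 2 + 2 * (⟪x i, w⟫ - ⟪z, w⟫)) l (𝓝 (‖w‖ ^ 2)) := by
    have hd0 : Tendsto d l (𝓝 0) := tendsto_zero_iff_norm_tendsto_zero.2 hd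
    simpa using (((tendsto_const_nhds (x := w)).sub hd0).norm.pow 2).add
      (((hz w).sub (tendsto_const_nhds (x := ⟪z, w⟫))).const_mul 2)
  have hw : ‖w‖ ^ 2 ≤ 0 := le_of_tendsto_of_tendsto' hlim (by simpa using hd.const_mul _) hle
  simpa [w, sub_eq_zero, eq_comm] using hw

variable [CompleteSpace H]

theorem exists_tendsto_inner_of_norm_le (U : Ultrafilter ι) {x : ι → H} {B : ℝ}
    (hB : ∀ i, ‖x i‖ ≤ B) : ∃ z, ∀ y, Tendsto (fun i => ⟪x i, y⟫) U (𝓝 ⟪z, y⟫) := by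
  -- Banach–Alaoglu in the dual, transported back by the Riesz isomorphism
  set D : ι → WeakDual ℝ H := fun i => StrongDual.toWeakDual (InnerProductSpace.toDual ℝ H (x i))
  have hD : (U.map D : Filter (WeakDual ℝ H)) ≤
      𝓟 (WeakDual.toStrongDual ⁻¹' Metric.closedBall 0 B) := by
    refine le_principal_iff.2 (mem_map.2 (Eventually.of_forall fun i => ?_))
    simpa [D] using hB i
  obtain ⟨φ, -, hφ⟩ := (WeakDual.isCompact_closedBall 0 B).ultrafilter_le_nhds _ hD
  refine ⟨(InnerProductSpace.toDual ℝ H).symm (WeakDual.toStrongDual φ), fun y => ?_⟩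
  rw [InnerProductSpace.toDual_symm_apply]
  exact ((WeakDual.eval_continuous y).tendsto φ).comp hφ

theorem Convex.mem_of_tendsto_inner {C : Set H} (hCv : Convex ℝ C) (hCc : IsClosed C)
    {l : Filter ι} [l.NeBot] {x : ι → H} {z : H} (hxC : ∀ᶠ i in l, x i ∈ C)
    (hz : ∀ y, Tendsto (fun i => ⟪x i, y⟫) l (𝓝 ⟪z, y⟫)) : z ∈ C := by
  by_contra hzC
  obtain ⟨f, c, hfC, hfz⟩ := geometric_hahn_banach_closed_point hCv hCc hzC
  have hf : ∀ v, f v = ⟪v, (InnerProductSpace.toDual ℝ H).symm f⟫ := fun v => by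
    rw [real_inner_comm, InnerProductSpace.toDual_symm_apply]
  have := le_of_tendsto (hz ((InnerProductSpace.toDual ℝ H).symm f))
    (hxC.mono fun i hi => by rw [← hf]; exact (hfC _ hi).le)
  rw [← hf] at this
  linarith

theorem eventually_inner_sub_le_of_tendsto_norm_sub {C : Set H} {T : H → H}
    (hCc : IsClosed C) (hCv : Convex ℝ C) (hne : ∀ x ∈ C, ∀ y ∈ C, ‖T x - T y‖ ≤ ‖x - y‖)
    {u p : H} (hp : ∀ w ∈ C, T w = w → ⟪u - p, w - p⟫ ≤ 0) {l : Filter ι} {x : ι → H} {B : ℝ}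
    (hxC : ∀ i, x i ∈ C) (hB : ∀ i, ‖x i‖ ≤ B)
    (hd : Tendsto (fun i => ‖x i - T (x i)‖) l (𝓝 0)) {ε : ℝ} (hε : 0 < ε) :
    ∀ᶠ i in l, ⟪u - p, x i - p⟫ ≤ ε := by
  by_contra h
  have hfreq : ∃ᶠ i in l, ε < ⟪u - p, x i - p⟫ := by simpa using h
  -- a weak cluster point along the indices where the bound fails is a fixed point of `T`
  set l' := l ⊓ 𝓟 {i | ε < ⟪u - p, x i - p⟫}
  have : l'.NeBot := frequently_iff_neBot.1 hfreq
  set U := Ultrafilter.of l'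
  have hUl : (U : Filter ι) ≤ l := (Ultrafilter.of_le l').trans inf_le_left
  obtain ⟨z, hz⟩ := exists_tendsto_inner_of_norm_le U hB
  have hzC : z ∈ C := hCv.mem_of_tendsto_inner hCc (.of_forall hxC) hz
  have hzT : T z = z := isFixedPt_of_tendsto_inner hne hxC hzC hB hz (hd.mono_left hUl)
  have hlim : Tendsto (fun i => ⟪u - p, x i - p⟫) U (𝓝 ⟪u - p, z - p⟫) := by
    have e : ∀ v, ⟪u - p, v - p⟫ = ⟪v, u - p⟫ - ⟪p, u - p⟫ := fun v => by
      rw [real_inner_comm, inner_sub_left]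
    simp only [e]
    exact (hz (u - p)).sub tendsto_const_nhds
  have hev : ∀ᶠ i in (U : Filter ι), ε < ⟪u - p, x i - p⟫ :=
    (Ultrafilter.of_le l').trans inf_le_right (mem_principal_self _)
  linarith [ge_of_tendsto hlim (hev.mono fun i hi => hi.le), hp z hzC hzT]

theorem exists_mem_fixedPoints_forall_inner_sub_nonpos {C : Set H} {T : H → H}
    (hCc : IsClosed C) (hCv : Convex ℝ C) (hne : ∀ x ∈ C, ∀ y ∈ C, ‖T x - T y‖ ≤ ‖x - y‖)
    {z : H} (hzC : z ∈ C) (hzT : T z = z) (u : H) :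
    ∃ p ∈ C, T p = p ∧ ∀ w ∈ C, T w = w → ⟪u - p, w - p⟫ ≤ 0 := by
  have hFv := convex_inter_fixedPoints hCv hne
  obtain ⟨p, hpF, hpmin⟩ := exists_norm_eq_iInf_of_complete_convex
    (show (C ∩ Function.fixedPoints T).Nonempty from ⟨z, hzC, hzT⟩)
    (isClosed_inter_fixedPoints hCc hne).isComplete hFv u
  exact ⟨p, hpF.1, hpF.2, fun w hwC hwT =>
    (norm_eq_iInf_iff_real_inner_le_zero hFv hpF).1 hpmin w ⟨hwC, hwT⟩⟩

theorem eventually_two_mul_inner_succ_sub_le {C : Set H} {T : H → H} (hCc : IsClosed C)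
    (hCv : Convex ℝ C) (hne : ∀ x ∈ C, ∀ y ∈ C, ‖T x - T y‖ ≤ ‖x - y‖) {u p : H}
    (hp : ∀ w ∈ C, T w = w → ⟪u - p, w - p⟫ ≤ 0) {x : ℕ → H} {B : ℝ} (hxC : ∀ n, x n ∈ C)
    (hB : ∀ n, ‖x n‖ ≤ B) {l : Filter ℕ} (hd : Tendsto (fun n => ‖x n - T (x n)‖) l (𝓝 0))
    (hstep : Tendsto (fun n => ‖x (n + 1) - x n‖) l (𝓝 0)) {ε : ℝ} (hε : 0 < ε) :
    ∀ᶠ n in l, 2 * ⟪u - p, x (n + 1) - p⟫ ≤ ε := by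
  filter_upwards [eventually_inner_sub_le_of_tendsto_norm_sub hCc hCv hne hp hxC hB hd
      (by positivity : 0 < ε / 4),
    (hstep.const_mul ‖u - p‖).eventually (eventually_le_nhds (b := ε / 4) (by simpa using hε))]
    with n h₁ h₂
  have h₃ := real_inner_le_norm (u - p) (x (n + 1) - x n)
  rw [show x (n + 1) - p = (x n - p) + (x (n + 1) - x n) by abel, inner_add_right]
  linarith

theorem tendsto_of_halpern_averaged {C : Set H} {T : H → H} (hCc : IsClosed C)
    (hCv : Convex ℝ C) (hne : ∀ x ∈ C, ∀ y ∈ C, ‖T x - T y‖ ≤ ‖x - y‖) {u p : H} (hpC : p ∈ C)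
    (hpT : T p = p) (hp : ∀ w ∈ C, T w = w → ⟪u - p, w - p⟫ ≤ 0) {δ : ℝ}
    (hδ : δ ∈ Ioo (0 : ℝ) 1) {α : ℕ → ℝ} (hα : ∀ n, α n ∈ Icc (0 : ℝ) 1)
    (hα0 : Tendsto α atTop (𝓝 0)) (hαdiv : Tendsto (fun N => ∑ n ∈ range N, α n) atTop atTop)
    {x y : ℕ → H} {e : ℕ → ℝ} {B : ℝ} (hxC : ∀ n, x n ∈ C) (hB : ∀ n, ‖x n‖ ≤ B)
    (he : Summable e) (hy : ∀ n, ‖y n - ((1 - δ) • x n + δ • T (x n))‖ ≤ e n)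
    (hrec : ∀ n, x (n + 1) = α n • u + (1 - α n) • y n) :
    Tendsto x atTop (𝓝 p) := by
  obtain ⟨hδ0, hδ1⟩ := hδ
  set M := B + ‖p‖
  set E := ∑' n, e n
  set κ := δ * (1 - δ)
  have hκ : 0 < κ := mul_pos hδ0 (sub_pos.2 hδ1)
  have he0 : ∀ n, 0 ≤ e n := fun n => (norm_nonneg _).trans (hy n)
  have heE : ∀ n, e n ≤ E := fun n => he.le_tsum n fun j _ => he0 j
  have hxM : ∀ n, ‖x n - p‖ ≤ M := fun n => (norm_sub_le _ _).trans (by linarith [hB n])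
  have hTx : ∀ n, ‖T (x n) - p‖ ≤ ‖x n - p‖ := fun n => by
    simpa [hpT] using hne _ (hxC n) p hpC
  have hsq_succ : ∀ n, ‖x (n + 1) - p‖ ^ 2 ≤ (1 - α n) * ‖x n - p‖ ^ 2
      + α n * (2 * ⟪u - p, x (n + 1) - p⟫) - (1 - α n) * κ * ‖x n - T (x n)‖ ^ 2
      + (2 * M + E) * e n := fun n => by
    rw [hrec n]
    exact norm_halpern_sub_sq_le (hα n).1 (hα n).2 hδ0.le hδ1.le (hTx n) (hxM n) (hy n) (heE n)
  have hsucc : ∀ n, ‖x (n + 1) - x n‖ ≤ α n * (‖u - p‖ + M + E) + e n + δ * ‖x n - T (x n)‖ :=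
    fun n => by
      rw [hrec n]
      exact norm_halpern_sub_le (hα n).1 hδ0.le hδ1.le (hTx n) (hxM n) (hy n) (heE n)
  have hsq : Tendsto (fun n => ‖x n - p‖ ^ 2) atTop (𝓝 0) := by
    refine tendsto_zero_of_le_one_sub_mul_add_mul_sub_add (B := 2 * (‖u - p‖ * M)) hα hα0 hαdiv
      (fun n => sq_nonneg _)
      (fun n => mul_nonneg (mul_nonneg (sub_nonneg.2 (hα n).2) hκ.le) (sq_nonneg _))
      (fun n => mul_nonneg (by linarith [norm_nonneg (x 0 - p), hxM 0, he0 0, heE 0]) (he0 n))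
      (he.mul_left _) (fun n => ?_) hsq_succ fun l hl hη ε hε => ?_
    · gcongr
      exact (real_inner_le_norm _ _).trans (by gcongr; exact hxM _)
    have hd : Tendsto (fun n => ‖x n - T (x n)‖) l (𝓝 0) := by
      simpa [Real.sqrt_sq (norm_nonneg _)] using
        (tendsto_of_tendsto_one_sub_mul_mul hκ.ne' (hα0.mono_left hl) hη).sqrt
    refine eventually_two_mul_inner_succ_sub_le hCc hCv hne hp hxC hB hd ?_ hε
    refine squeeze_zero (fun n => norm_nonneg _) hsucc ?_
    simpa using (((hα0.mono_left hl).mul_const (‖u - p‖ + M + E)).add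
      (he.tendsto_atTop_zero.mono_left hl)).add (hd.const_mul δ)
  exact tendsto_iff_norm_sub_tendsto_zero.2 (by simpa [Real.sqrt_sq (norm_nonneg _)] using hsq.sqrt)

end InnerProductSpace

theorem stmt_19_general {H : Type*} [NormedAddCommGroup H] [InnerProductSpace ℝ H] [CompleteSpace H]
    (C : Set H) (hCc : IsClosed C) (hCv : Convex ℝ C)
    (T S : H → H) (hT : Set.MapsTo T C C) (hS : Set.MapsTo S C C)
    (hne : ∀ x ∈ C, ∀ y ∈ C, ‖T x - T y‖ ≤ ‖x - y‖)
    (hns : ∀ x ∈ C, ∀ y ∈ C, 2 * ‖S x - S y‖ ^ 2 ≤ ‖S x - y‖ ^ 2 + ‖x - S y‖ ^ 2)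
    (hFix : ∃ z ∈ C, T z = z ∧ S z = z)
    (δ : ℝ) (hδ : δ ∈ Set.Ioo (0 : ℝ) 1)
    (AT AS : H → H)
    (hAT : ∀ x, AT x = (1 - δ) • x + δ • T x)
    (hAS : ∀ x, AS x = (1 - δ) • x + δ • S x)
    (u : H) (hu : u ∈ C)
    (α β : ℕ → ℝ) (hα : ∀ n, α n ∈ Set.Ioo (0 : ℝ) 1) (hβ : ∀ n, β n ∈ Set.Icc (0 : ℝ) 1)
    (hα0 : Filter.Tendsto α Filter.atTop (nhds 0))
    (hαdiv : Filter.Tendsto (fun N => ∑ n ∈ Finset.range N, α n) Filter.atTop Filter.atTop)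
    (hβsum : Summable (fun n => 1 - β n))
    (x : ℕ → H) (hx1 : x 1 ∈ C)
    (hrec : ∀ n ≥ 1, x (n + 1) =
      α n • u + (1 - α n) • (β n • AT (x n) + (1 - β n) • AS (x n))) :
    ∃ p, p ∈ C ∧ T p = p ∧ Filter.Tendsto x Filter.atTop (nhds p) := by
  obtain ⟨z, hzC, hzT, hzS⟩ := hFix
  set R := max ‖x 1 - z‖ ‖u - z‖
  set K := C ∩ Metric.closedBall z R
  have hK : Convex ℝ K := hCv.inter (convex_closedBall z R)
  have hATK : MapsTo AT K K := funext hAT ▸ hK.mapsTo_averaged hδ.1.le hδ.2.le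
    (mapsTo_inter_closedBall R hT fun w hw => by simpa [hzT] using hne w hw z hzC)
  have hASK : MapsTo AS K K := funext hAS ▸ hK.mapsTo_averaged hδ.1.le hδ.2.le
    (mapsTo_inter_closedBall R hS fun w hw => norm_sub_le_of_nonspreading hns hzC hzS hw)
  have hα' : ∀ n, α (n + 1) ∈ Icc (0 : ℝ) 1 := fun n => Ioo_subset_Icc_self (hα (n + 1))
  have hrec' := fun n => hrec (n + 1) (Nat.le_add_left 1 n)
  have hxK : ∀ n, x (n + 1) ∈ K := hK.halpern_mem ⟨hu, by simp [R, dist_eq_norm]⟩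
    ⟨hx1, by simp [R, dist_eq_norm]⟩
    (fun n => hK.mapsTo_smul_add_smul hATK hASK (hβ _).1 (sub_nonneg.2 (hβ _).2) (by ring))
    hα' hrec'
  obtain ⟨p, hpC, hpT, hp⟩ := exists_mem_fixedPoints_forall_inner_sub_nonpos hCc hCv hne hzC hzT u
  refine ⟨p, hpC, hpT, (tendsto_add_atTop_iff_nat 1).1 ?_⟩
  refine tendsto_of_halpern_averaged hCc hCv hne hpC hpT hp hδ hα'
    (hα0.comp (tendsto_add_atTop_nat 1)) (tendsto_sum_range_add_one_atTop hαdiv)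
    (fun n => (hxK n).1) (fun n => norm_le_of_mem_closedBall (hxK n).2)
    (((summable_nat_add_iff 1).2 hβsum).mul_left (2 * R)) (fun n => ?_) hrec'
  rw [← hAT]
  exact norm_smul_add_one_sub_smul_sub_le (hATK (hxK n)).2 (hASK (hxK n)).2 (hβ _).2

theorem stmt_19 {H : Type*} [NormedAddCommGroup H] [InnerProductSpace ℝ H] [CompleteSpace H]
    (C : Set H) (hC : C.Nonempty) (hCc : IsClosed C) (hCv : Convex ℝ C)
    (T S : H → H) (hT : Set.MapsTo T C C) (hS : Set.MapsTo S C C)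
    (hne : ∀ x ∈ C, ∀ y ∈ C, ‖T x - T y‖ ≤ ‖x - y‖)
    (hns : ∀ x ∈ C, ∀ y ∈ C, 2 * ‖S x - S y‖ ^ 2 ≤ ‖S x - y‖ ^ 2 + ‖x - S y‖ ^ 2)
    (hFix : ∃ z ∈ C, T z = z ∧ S z = z)
    (δ : ℝ) (hδ : δ ∈ Set.Ioo (0 : ℝ) 1)
    (AT AS : H → H)
    (hAT : ∀ x, AT x = (1 - δ) • x + δ • T x)
    (hAS : ∀ x, AS x = (1 - δ) • x + δ • S x)
    (u : H) (hu : u ∈ C)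
    (α β : ℕ → ℝ) (hα : ∀ n, α n ∈ Set.Ioo (0 : ℝ) 1) (hβ : ∀ n, β n ∈ Set.Icc (0 : ℝ) 1)
    (hα0 : Filter.Tendsto α Filter.atTop (nhds 0))
    (hαdiv : Filter.Tendsto (fun N => ∑ n ∈ Finset.range N, α n) Filter.atTop Filter.atTop)
    (hβsum : Summable (fun n => 1 - β n))
    (x : ℕ → H) (hx1 : x 1 ∈ C)
    (hrec : ∀ n ≥ 1, x (n + 1) =
      α n • u + (1 - α n) • (β n • AT (x n) + (1 - β n) • AS (x n))) :
    ∃ p, p ∈ C ∧ T p = p ∧ Filter.Tendsto x Filter.atTop (nhds p) :=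
  stmt_19_general C hCc hCv T S hT hS hne hns hFix δ hδ AT AS hAT hAS u hu α β hα hβ hα0 hαdiv hβsum
    x hx1 hrec
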